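/- Fix a system of positive coset-depending weights w. The coset weighted pure harmonic subspace ℋ^{cw}, defined as the orthogonal complement in 𝒢 (with respect to ⟨c,c'⟩ = Σ_i Σ_s c_i(s)c'_i(s)) of the subspace 𝒢_P^{cw} of coset weighted potential games with respect to w, has dimension (n−1)k − Σ_{j=1}^n k/k_j + 1, where k = Π_{i=1}^n k_i. -/

import Mathlib

/-- `f : S → ℝ` depends only on the strategies of the players other than `i`
(i.e. it is a function of `s_{-i}`). -/
def IndepOf {n : ℕ} {k : Fin n → ℕ} (i : Fin n) (f : (∀ j, Fin (k j)) → ℝ) : Prop :=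
  ∀ (s : ∀ j, Fin (k j)) (x : Fin (k i)), f (Function.update s i x) = f s

/-- `P` is a coset weighted potential function for the game `c` with respect to the
coset-depending weights `w`. -/
def IsCWPotentialFn {n : ℕ} {k : Fin n → ℕ} (c w : Fin n → (∀ j, Fin (k j)) → ℝ)
    (P : (∀ j, Fin (k j)) → ℝ) : Prop :=
  ∀ (i : Fin n) (s : ∀ j, Fin (k j)) (x y : Fin (k i)),
    c i (Function.update s i x) - c i (Function.update s i y)
      = w i s * (P (Function.update s i x) - P (Function.update s i y))

/-- `c` is a coset weighted potential game with respect to `w`. -/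
def IsCWPG {n : ℕ} {k : Fin n → ℕ} (w c : Fin n → (∀ j, Fin (k j)) → ℝ) : Prop :=
  ∃ P, IsCWPotentialFn c w P

/-- `c` is a coset weighted pure potential game w.r.t. `w`:
`c_i(s) = w_i(s_{-i}) (P(s) − (1/k_i) Σ_{x ∈ S_i} P(x, s_{-i}))` for some `P`. -/
def IsCWPurePotential {n : ℕ} {k : Fin n → ℕ}
    (w c : Fin n → (∀ j, Fin (k j)) → ℝ) : Prop :=
  ∃ P : (∀ j, Fin (k j)) → ℝ, ∀ (i : Fin n) (s : ∀ j, Fin (k j)),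
    c i s = w i s * (P s - (1 / (k i : ℝ)) * ∑ x : Fin (k i), P (Function.update s i x))

/-- `c` is a non-strategic game. -/
def IsNonStrategic {n : ℕ} {k : Fin n → ℕ} (c : Fin n → (∀ j, Fin (k j)) → ℝ) : Prop :=
  ∀ (i : Fin n) (s : ∀ j, Fin (k j)) (x y : Fin (k i)),
    c i (Function.update s i x) = c i (Function.update s i y)

/-- The inner product `⟨c, c'⟩ = Σ_i Σ_s c_i(s) c'_i(s)` on the space of games. -/
noncomputable def gameInner {n : ℕ} {k : Fin n → ℕ}
    (c c' : Fin n → (∀ j, Fin (k j)) → ℝ) : ℝ :=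
  ∑ i : Fin n, ∑ s : ∀ j, Fin (k j), c i s * c' i s

/-- `c` is a coset weighted pure harmonic game w.r.t. `w`: it is orthogonal to every
coset weighted potential game w.r.t. `w`. -/
def IsCWPureHarmonic {n : ℕ} {k : Fin n → ℕ}
    (w c : Fin n → (∀ j, Fin (k j)) → ℝ) : Prop :=
  ∀ c' : Fin n → (∀ j, Fin (k j)) → ℝ, IsCWPG w c' → gameInner c c' = 0


/-!
Every coset weighted potential game splits as `c_i = w_i (P − avg_i P) + d_i(s_{-i})`, a pure
potential part plus a non-strategic part, because `c_i − w_i P` does not depend on `s_i`. So the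
potential games are the range of the linear map `(P, d) ↦ c` on `ℝ^S × ∏_i ℝ^{S_{-i}}`, a space of
dimension `k + Σ_i k/k_i`. Its kernel is spanned by `(1, 0)`: summing over `s_i` forces `d = 0`,
and then `P = avg_i P` for every `i` (as `w > 0`), so `P` is constant. Hence the potential games
have dimension `k + Σ_i k/k_i − 1`, and their orthogonal complement in the `nk`-dimensional space
of games has dimension `(n − 1)k − Σ_i k/k_i + 1`; the truncated subtraction is harmless because
`k/k_i ≤ k/2` and `n ≥ 2`.
-/

open Finset Function Module

theorem apply_eq_of_forall_apply_update_eq {ι γ : Type*} [Fintype ι] [DecidableEq ι]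
    {β : ι → Type*} {f : (∀ i, β i) → γ} (h : ∀ s i (x : β i), f (update s i x) = f s)
    (s t : ∀ i, β i) : f s = f t := by
  suffices ∀ A : Finset ι, ∀ s, (∀ j ∉ A, s j = t j) → f s = f t from
    this univ s fun j hj => absurd (mem_univ j) hj
  intro A
  induction A using Finset.induction_on with
  | empty => exact fun s hs => congrArg f (funext fun j => hs j (notMem_empty j))
  | insert a A _ ih =>
    intro s hs
    rw [← h s a (t a)]
    refine ih _ fun j hj => ?_
    by_cases hja : j = a
    · subst hja; simp
    · rw [update_of_ne hja]; exact hs j (by simp [hja, hj])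

theorem sum_prod_div_le_card_sub_one_mul {ι : Type*} [Fintype ι] (hι : 2 ≤ Fintype.card ι)
    (k : ι → ℕ) (hk : ∀ i, 2 ≤ k i) : ∑ j, (∏ i, k i) / k j ≤ (Fintype.card ι - 1) * ∏ i, k i := by
  have two_mul_le : ∀ j, 2 * ((∏ i, k i) / k j) ≤ ∏ i, k i := fun j =>
    calc 2 * ((∏ i, k i) / k j) ≤ k j * ((∏ i, k i) / k j) := Nat.mul_le_mul_right _ (hk j)
      _ = ∏ i, k i := Nat.mul_div_cancel' (dvd_prod_of_mem k (mem_univ j))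
  have : 2 * ∑ j, (∏ i, k i) / k j ≤ Fintype.card ι * ∏ i, k i := by
    simpa [mul_sum] using sum_le_sum fun j (_ : j ∈ univ) => two_mul_le j
  have hcard : Fintype.card ι ≤ 2 * (Fintype.card ι - 1) := by omega
  have := Nat.mul_le_mul_right (∏ i, k i) hcard
  rw [mul_assoc] at this
  omega

theorem Fintype.prod_subtype_ne_eq_div {ι : Type*} [Fintype ι] [DecidableEq ι] (k : ι → ℕ)
    (i : ι) (hk : 0 < k i) : ∏ j : {j // j ≠ i}, k j = (∏ j, k j) / k i := by
  rw [Fintype.prod_eq_mul_prod_subtype_ne k i, Nat.mul_div_cancel_left _ hk]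

namespace CWGame

variable {n : ℕ} {k : Fin n → ℕ}

abbrev Profile (k : Fin n → ℕ) : Type := ∀ j, Fin (k j)

abbrev Game (k : Fin n → ℕ) : Type := Fin n → Profile k → ℝ

abbrev OppProfile (k : Fin n → ℕ) (i : Fin n) : Type := ∀ j : {j // j ≠ i}, Fin (k j)

def opp (i : Fin n) (s : Profile k) : OppProfile k i := fun j => s j

@[simp]
theorem opp_update (i : Fin n) (s : Profile k) (x : Fin (k i)) :
    opp i (update s i x) = opp i s := by
  funext j
  exact update_of_ne j.2 x s

theorem piSplitAt_symm_opp (i : Fin n) (s : Profile k) (x : Fin (k i)) :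
    (Equiv.piSplitAt i _).symm (x, opp i s) = update s i x := by
  funext j
  by_cases h : j = i
  · subst h; simp
  · simp [h, opp]

theorem opp_surjective (i : Fin n) (hk : 0 < k i) : Surjective (opp (k := k) i) := fun t =>
  ⟨(Equiv.piSplitAt i _).symm (⟨0, hk⟩, t),
    congrArg Prod.snd ((Equiv.piSplitAt i _).apply_symm_apply _)⟩

theorem exists_eq_comp_opp_of_indepOf {i : Fin n} {f : Profile k → ℝ} (hf : IndepOf i f)
    (hk : 0 < k i) : ∃ g : OppProfile k i → ℝ, ∀ s, f s = g (opp i s) :=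
  ⟨fun t => f ((Equiv.piSplitAt i _).symm (⟨0, hk⟩, t)), fun s => by
    dsimp only
    rw [piSplitAt_symm_opp, hf]⟩

noncomputable def avg (i : Fin n) (P : Profile k → ℝ) (s : Profile k) : ℝ :=
  (k i : ℝ)⁻¹ * ∑ x, P (update s i x)

@[simp]
theorem avg_update (i : Fin n) (P : Profile k → ℝ) (s : Profile k) (x : Fin (k i)) :
    avg i P (update s i x) = avg i P s := by
  simp [avg]

theorem avg_const (i : Fin n) (hk : 0 < k i) (a : ℝ) (s : Profile k) :
    avg i (fun _ => a) s = a := by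
  simp [avg, hk.ne']

theorem sum_sub_avg (i : Fin n) (hk : 0 < k i) (P : Profile k → ℝ) (s : Profile k) :
    ∑ x, (P (update s i x) - avg i P s) = 0 := by
  simp [avg, sum_sub_distrib, hk.ne']

variable {w : Game k}

abbrev Param (k : Fin n → ℕ) : Type := (Profile k → ℝ) × (∀ i, OppProfile k i → ℝ)

noncomputable def potentialGame (w : Game k) : Param k →ₗ[ℝ] Game k where
  toFun p i s := w i s * (p.1 s - avg i p.1 s) + p.2 i (opp i s)
  map_add' p q := by
    funext i s
    simp only [avg, Prod.fst_add, Prod.snd_add, Pi.add_apply, sum_add_distrib]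
    ring
  map_smul' a p := by
    funext i s
    simp only [avg, Prod.smul_fst, Prod.smul_snd, Pi.smul_apply, smul_eq_mul, ← mul_sum,
      RingHom.id_apply]
    ring

theorem potentialGame_apply (p : Param k) (i : Fin n) (s : Profile k) :
    potentialGame w p i s = w i s * (p.1 s - avg i p.1 s) + p.2 i (opp i s) :=
  rfl

theorem isCWPG_potentialGame (hwI : ∀ i, IndepOf i (w i)) (p : Param k) :
    IsCWPG w (potentialGame w p) :=
  ⟨p.1, fun i s x y => by
    simp only [potentialGame_apply, hwI i s, avg_update, opp_update]
    ring⟩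

theorem IsCWPG.exists_potentialGame_eq (hk : ∀ i, 0 < k i) (hwI : ∀ i, IndepOf i (w i))
    {c : Game k} (hc : IsCWPG w c) : ∃ p, potentialGame w p = c := by
  obtain ⟨P, hP⟩ := hc
  have hindep : ∀ i, IndepOf i fun s => c i s - w i s * (P s - avg i P s) := by
    intro i s x
    have := hP i s x (s i)
    rw [update_eq_self] at this
    simp only [hwI i s, avg_update]
    linarith
  choose d hd using fun i => exists_eq_comp_opp_of_indepOf (hindep i) (hk i)
  refine ⟨(P, d), funext fun i => funext fun s => ?_⟩
  simp only [potentialGame_apply, ← hd]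
  ring

theorem mem_range_potentialGame_iff (hk : ∀ i, 0 < k i) (hwI : ∀ i, IndepOf i (w i))
    (c : Game k) : c ∈ LinearMap.range (potentialGame w) ↔ IsCWPG w c :=
  ⟨fun ⟨p, hp⟩ => hp ▸ isCWPG_potentialGame hwI p, IsCWPG.exists_potentialGame_eq hk hwI⟩

theorem ker_potentialGame (hk : ∀ i, 0 < k i) (hw : ∀ i s, 0 < w i s)
    (hwI : ∀ i, IndepOf i (w i)) :
    LinearMap.ker (potentialGame w) = Submodule.span ℝ {((fun _ => 1, 0) : Param k)} := by
  refine le_antisymm (fun p hp => ?_) ?_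
  · have hp : ∀ i s, w i s * (p.1 s - avg i p.1 s) + p.2 i (opp i s) = 0 :=
      fun i s => congrFun (congrFun hp i) s
    have hd : ∀ i s, p.2 i (opp i s) = 0 := by
      intro i s
      have : ∑ x, (w i s * (p.1 (update s i x) - avg i p.1 s) + p.2 i (opp i s)) = 0 :=
        sum_eq_zero fun x _ => by simpa [hwI i s] using hp i (update s i x)
      rw [sum_add_distrib, ← mul_sum, sum_sub_avg i (hk i), sum_const, card_univ,
        Fintype.card_fin, nsmul_eq_mul] at this
      simpa [(hk i).ne'] using this
    have hP : ∀ i s, p.1 s = avg i p.1 s := fun i s => by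
      have := hp i s
      rw [hd, add_zero] at this
      exact sub_eq_zero.mp ((mul_eq_zero.mp this).resolve_left (hw i s).ne')
    have hPconst := apply_eq_of_forall_apply_update_eq (f := p.1) fun s i x => by
      rw [hP i (update s i x), avg_update, ← hP i s]
    refine Submodule.mem_span_singleton.mpr ⟨p.1 fun j => ⟨0, hk j⟩, Prod.ext ?_ ?_⟩
    · funext s
      simpa using hPconst _ s
    · funext i t
      obtain ⟨s, rfl⟩ := opp_surjective i (hk i) t
      simp [hd]
  · rw [Submodule.span_singleton_le_iff_mem, LinearMap.mem_ker]
    funext i s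
    simp [potentialGame_apply, avg_const i (hk i)]

theorem finrank_param (hk : ∀ i, 0 < k i) :
    finrank ℝ (Param k) = ∏ i, k i + ∑ i, (∏ j, k j) / k i := by
  rw [finrank_prod, finrank_fintype_fun_eq_card, finrank_pi_fintype]
  simp [Fintype.card_pi, Fintype.prod_subtype_ne_eq_div k _ (hk _)]

theorem finrank_range_potentialGame_add_one (hk : ∀ i, 0 < k i) (hw : ∀ i s, 0 < w i s)
    (hwI : ∀ i, IndepOf i (w i)) :
    finrank ℝ (LinearMap.range (potentialGame w)) + 1 = ∏ i, k i + ∑ i, (∏ j, k j) / k i := by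
  have hne : ((fun _ => 1, 0) : Param k) ≠ 0 := fun h => by
    simpa using congrFun (congrArg Prod.fst h) fun j => ⟨0, hk j⟩
  have := LinearMap.finrank_range_add_finrank_ker (potentialGame w)
  rwa [ker_potentialGame hk hw hwI, finrank_span_singleton hne, finrank_param hk] at this

noncomputable def gameEquiv : Game k ≃ₗ[ℝ] EuclideanSpace ℝ (Fin n × Profile k) where
  toFun c := WithLp.toLp 2 fun p => c p.1 p.2
  invFun f i s := f (i, s)
  map_add' _ _ := rfl
  map_smul' _ _ := rfl
  left_inv _ := rfl
  right_inv _ := rfl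

theorem inner_gameEquiv (c c' : Game k) :
    inner ℝ (gameEquiv c) (gameEquiv c') = gameInner c' c := by
  simp [PiLp.inner_apply, gameEquiv, gameInner, Fintype.sum_prod_type]
  rfl

theorem exists_gameInner_orthogonal (W : Submodule ℝ (Game k)) :
    ∃ V : Submodule ℝ (Game k), (∀ c, c ∈ V ↔ ∀ c' ∈ W, gameInner c c' = 0) ∧
      finrank ℝ V + finrank ℝ W = n * ∏ i, k i := by
  let e : Game k ≃ₗ[ℝ] _ := gameEquiv
  refine ⟨(W.map e.toLinearMap)ᗮ.comap e.toLinearMap, fun c => ?_, ?_⟩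
  · simp only [Submodule.mem_comap, Submodule.mem_orthogonal, Submodule.mem_map,
      forall_exists_index, and_imp, forall_apply_eq_imp_iff₂]
    simp only [e, LinearEquiv.coe_coe, inner_gameEquiv]
  · rw [Submodule.comap_equiv_eq_map_symm, LinearEquiv.finrank_map_eq, add_comm,
      ← LinearEquiv.finrank_map_eq e W, Submodule.finrank_add_finrank_orthogonal,
      finrank_euclideanSpace]
    simp [Fintype.card_pi]

end CWGame

open CWGame in
theorem pure_harmonic_subspace_dim (n : ℕ) (hn : 2 ≤ n) (k : Fin n → ℕ)
    (hk : ∀ i, 2 ≤ k i) (w : Fin n → (∀ j, Fin (k j)) → ℝ)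
    (hw : ∀ i s, 0 < w i s) (hwI : ∀ i, IndepOf i (w i)) :
    ∃ V : Submodule ℝ (Fin n → (∀ j, Fin (k j)) → ℝ),
      (∀ c, c ∈ V ↔ IsCWPureHarmonic w c) ∧
      Module.finrank ℝ V = (n - 1) * (∏ i, k i) - (∑ j, (∏ i, k i) / k j) + 1 := by
  have hk₀ : ∀ i, 0 < k i := fun i => by linarith [hk i]
  obtain ⟨V, hV, hdim⟩ := exists_gameInner_orthogonal (LinearMap.range (potentialGame w))
  refine ⟨V, fun c => ?_, ?_⟩
  · simp [hV, mem_range_potentialGame_iff hk₀ hwI, IsCWPureHarmonic]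
  · have hrange := finrank_range_potentialGame_add_one hk₀ hw hwI
    have hsum : ∑ j, (∏ i, k i) / k j ≤ (n - 1) * ∏ i, k i := by
      simpa using sum_prod_div_le_card_sub_one_mul (by simpa using hn) k hk
    have hmul : (n - 1) * ∏ i, k i + ∏ i, k i = n * ∏ i, k i := by
      rw [← Nat.succ_mul, Nat.succ_eq_add_one, Nat.sub_add_cancel (by omega)]
    -- `omega` compares atoms syntactically: state the goal's `finrank` over `Game k`, as in `hdim`
    show finrank ℝ V = _
    omega
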